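/- arXiv:2106.05065 — 9 statements merged into one kernel-verified Lean document; each statement's English description precedes it below -/
import Mathlib

section
/- Let n be a positive integer, P an n×n row-stochastic matrix (nonnegative entries, each row summing to 1), and π ∈ ℝ^n a nonnegative vector with πᵀP = πᵀ. Fix u ∈ Fin n and let Q be the matrix obtained from P by replacing its u-th row with the standard basis vector e_u. Then the sequence k ↦ πᵀ Q^k e_u is concave: for every k ∈ ℕ, πᵀ Q^{k+2} e_u − 2 πᵀ Q^{k+1} e_u + πᵀ Q^k e_u ≤ 0. -/
/-!
Put `Q = P` with row `u` replaced by `e_u` and `f k = Q^k e_u`. Row `u` of `Q` copies the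
`u`-th coordinate, so `f k u = 1` for all `k`, and since `Q` is nonnegative and `e_u ≤ Q e_u`,
the vectors `f k` increase with `k`. Hence the increment `d = f (k+1) - f k` is nonnegative and
vanishes at `u`. The second difference of `πᵀ f` equals `(πᵀQ - πᵀ) d`, and stationarity of `π`
for `P` gives `πᵀQ - πᵀ = π_u (e_u - P_u)`, so it equals `-π_u (P_u ⬝ d) ≤ 0`.
-/

open Matrix

namespace Matrix

variable {ι R : Type*}

theorem updateRow_nonneg [Zero R] [LE R] [DecidableEq ι] {A : Matrix ι ι R}
    (hA : ∀ i j, 0 ≤ A i j) (u : ι) {c : ι → R} (hc : 0 ≤ c) : ∀ i j, 0 ≤ A.updateRow u c i j := by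
  intro i j
  obtain rfl | hi := eq_or_ne i u
  · simpa using hc j
  · simpa [updateRow_ne hi] using hA i j

variable [Fintype ι]

theorem mulVec_mono_of_nonneg [Semiring R] [PartialOrder R] [IsOrderedRing R] {A : Matrix ι ι R}
    (hA : ∀ i j, 0 ≤ A i j) {x y : ι → R} (hxy : x ≤ y) : A *ᵥ x ≤ A *ᵥ y :=
  fun i => dotProduct_le_dotProduct_of_nonneg_left hxy (hA i)

variable [DecidableEq ι]

theorem vecMul_updateRow [Ring R] (v : ι → R) (A : Matrix ι ι R) (i : ι) (c : ι → R) :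
    v ᵥ* A.updateRow i c = v ᵥ* A + v i • (c - A i) := by
  rw [vecMul_eq_sum, vecMul_eq_sum, ← Finset.add_sum_erase _ _ (Finset.mem_univ i),
    ← Finset.add_sum_erase _ _ (Finset.mem_univ i)]
  rw [Finset.sum_congr rfl fun j hj => by rw [updateRow_ne (Finset.ne_of_mem_erase hj)]]
  rw [updateRow_self, smul_sub]
  abel

theorem dotProduct_pow_mulVec_second_difference [CommRing R] (v x : ι → R) (A : Matrix ι ι R)
    (k : ℕ) :
    v ⬝ᵥ (A ^ (k + 2) *ᵥ x) - 2 * (v ⬝ᵥ (A ^ (k + 1) *ᵥ x)) + v ⬝ᵥ (A ^ k *ᵥ x)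
      = (v ᵥ* A - v) ⬝ᵥ (A ^ (k + 1) *ᵥ x - A ^ k *ᵥ x) := by
  have hsucc : ∀ m, A ^ (m + 1) *ᵥ x = A *ᵥ (A ^ m *ᵥ x) := fun m => by
    rw [pow_succ', mulVec_mulVec]
  rw [hsucc (k + 1), hsucc k]
  simp only [sub_dotProduct, dotProduct_sub, dotProduct_mulVec v A]
  ring

section Semiring

variable [Semiring R]

theorem updateRow_single_mulVec_apply_self (A : Matrix ι ι R) (u : ι) (x : ι → R) :
    (A.updateRow u (Pi.single u 1) *ᵥ x) u = x u := by
  rw [updateRow_mulVec, Function.update_self, single_one_dotProduct]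

theorem pow_updateRow_single_mulVec_apply_self (A : Matrix ι ι R) (u : ι) (k : ℕ) :
    (A.updateRow u (Pi.single u 1) ^ k *ᵥ Pi.single u 1) u = 1 := by
  induction k with
  | zero => simp
  | succ k ih => rw [pow_succ', ← mulVec_mulVec, updateRow_single_mulVec_apply_self, ih]

variable [PartialOrder R]

theorem single_le_updateRow_single_mulVec {A : Matrix ι ι R} (hA : ∀ i j, 0 ≤ A i j) (u : ι) :
    Pi.single u 1 ≤ A.updateRow u (Pi.single u 1) *ᵥ Pi.single u 1 := by
  intro i
  obtain rfl | hi := eq_or_ne i u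
  · simp [updateRow_single_mulVec_apply_self]
  · simpa [updateRow_mulVec, hi] using hA i u

variable [IsOrderedRing R]

theorem pow_mulVec_le_pow_succ_mulVec {A : Matrix ι ι R} (hA : ∀ i j, 0 ≤ A i j) {x : ι → R}
    (hx : x ≤ A *ᵥ x) (k : ℕ) : A ^ k *ᵥ x ≤ A ^ (k + 1) *ᵥ x := by
  induction k with
  | zero => simpa using hx
  | succ k ih =>
    simpa only [mulVec_mulVec, ← pow_succ'] using mulVec_mono_of_nonneg hA ih

end Semiring

end Matrix

theorem stmt_1_general (n : ℕ)
    (P : Matrix (Fin n) (Fin n) ℝ)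
    (hPnn : ∀ i j, 0 ≤ P i j)
    (pv : Fin n → ℝ) (hpv : ∀ i, 0 ≤ pv i)
    (hstat : Matrix.vecMul pv P = pv)
    (u : Fin n) (k : ℕ) :
    pv ⬝ᵥ (((Matrix.updateRow P u (Pi.single u 1)) ^ (k + 2)) *ᵥ Pi.single u 1)
      - 2 * (pv ⬝ᵥ (((Matrix.updateRow P u (Pi.single u 1)) ^ (k + 1)) *ᵥ Pi.single u 1))
      + pv ⬝ᵥ (((Matrix.updateRow P u (Pi.single u 1)) ^ k) *ᵥ Pi.single u 1) ≤ 0 := by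
  set Q := P.updateRow u (Pi.single u 1)
  set e : Fin n → ℝ := Pi.single u 1
  have hQ : ∀ i j, 0 ≤ Q i j := updateRow_nonneg hPnn u (Pi.single_nonneg.2 zero_le_one)
  have hd : 0 ≤ Q ^ (k + 1) *ᵥ e - Q ^ k *ᵥ e :=
    sub_nonneg.2 (pow_mulVec_le_pow_succ_mulVec hQ (single_le_updateRow_single_mulVec hPnn u) k)
  have hdu : (Q ^ (k + 1) *ᵥ e - Q ^ k *ᵥ e) u = 0 := by
    rw [Pi.sub_apply, pow_updateRow_single_mulVec_apply_self,
      pow_updateRow_single_mulVec_apply_self, sub_self]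
  have hπQ : pv ᵥ* Q - pv = pv u • (e - P u) := by
    rw [vecMul_updateRow, hstat, add_sub_cancel_left]
  rw [dotProduct_pow_mulVec_second_difference, hπQ, smul_dotProduct, sub_dotProduct,
    single_one_dotProduct, hdu, zero_sub, smul_eq_mul, mul_neg, neg_nonpos]
  exact mul_nonneg (hpv u) (dotProduct_nonneg_of_nonneg (hPnn u) hd)

/-- For a row-stochastic `P`, a nonnegative left-fixed vector `π`
(`πᵀP = πᵀ`), and `Q` obtained from `P` by replacing row `u` with `e_u`, the
sequence `k ↦ πᵀ Q^k e_u` is concave. -/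
theorem stmt_1 (n : ℕ) (hn : 0 < n)
    (P : Matrix (Fin n) (Fin n) ℝ)
    (hPnn : ∀ i j, 0 ≤ P i j) (hProw : ∀ i, ∑ j, P i j = 1)
    (pv : Fin n → ℝ) (hpv : ∀ i, 0 ≤ pv i)
    (hstat : Matrix.vecMul pv P = pv)
    (u : Fin n) (k : ℕ) :
    pv ⬝ᵥ (((Matrix.updateRow P u (Pi.single u 1)) ^ (k + 2)) *ᵥ Pi.single u 1)
      - 2 * (pv ⬝ᵥ (((Matrix.updateRow P u (Pi.single u 1)) ^ (k + 1)) *ᵥ Pi.single u 1))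
      + pv ⬝ᵥ (((Matrix.updateRow P u (Pi.single u 1)) ^ k) *ᵥ Pi.single u 1) ≤ 0 :=
  stmt_1_general n P hPnn pv hpv hstat u k
end

section
/- Let m be a positive integer, V a finite set, σ : V → ℝ with σ_u ≥ 0 for all u, and for each i ∈ Fin m and u ∈ V let P_{i,u} : ℕ → ℝ be a nondecreasing function with 0 ≤ P_{i,u}(k) ≤ 1 for all k. Define r : (Fin m → ℕ) → ℝ by r(k) = Σ_{u∈V} σ_u (1 − Π_{i∈Fin m} (1 − P_{i,u}(k_i))). Then r is monotone (r(x) ≤ r(y) whenever x ≤ y coordinatewise) and submodular over the integer lattice (r(x ⊔ y) + r(x ⊓ y) ≤ r(x) + r(y) for all x, y, where ⊔ and ⊓ denote the coordinatewise maximum and minimum). -/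
/-!
With `q_{i,u} = 1 - P_{i,u}`, the summand of `u` is `σ_u (1 - ∏ᵢ q_{i,u}(k_i))`, where each
`q_{i,u}` is antitone and nonnegative. Monotonicity is then immediate. For submodularity,
antitonicity turns the product at `x ⊔ y` (resp. `x ⊓ y`) into the product of the coordinatewise
minima (resp. maxima) of the factors at `x` and `y`, and for nonnegative `aᵢ, bᵢ`
`∏ aᵢ + ∏ bᵢ ≤ ∏ min aᵢ bᵢ + ∏ max aᵢ bᵢ`, by induction on the number of factors.
-/

open Finset

section

variable {R : Type*} [CommRing R] [LinearOrder R] [IsStrictOrderedRing R]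

lemma mul_add_mul_le_min_mul_add_max_mul {p q A B M X : R} (hp : 0 ≤ p) (hq : 0 ≤ q)
    (hMA : M ≤ A) (hMB : M ≤ B) (hsum : A + B ≤ M + X) :
    p * A + q * B ≤ min p q * M + max p q * X := by
  rcases le_total p q with h | h
  · rw [min_eq_left h, max_eq_right h]
    nlinarith
  · rw [min_eq_right h, max_eq_left h]
    nlinarith

lemma prod_add_prod_le_prod_min_add_prod_max {ι : Type*} (s : Finset ι) {a b : ι → R}
    (ha : ∀ i, 0 ≤ a i) (hb : ∀ i, 0 ≤ b i) :
    ∏ i ∈ s, a i + ∏ i ∈ s, b i ≤ ∏ i ∈ s, min (a i) (b i) + ∏ i ∈ s, max (a i) (b i) := by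
  induction s using Finset.cons_induction with
  | empty => simp
  | cons j s hj ih =>
    simp only [prod_cons]
    have hmin : ∀ i ∈ s, 0 ≤ min (a i) (b i) := fun i _ => le_min (ha i) (hb i)
    exact mul_add_mul_le_min_mul_add_max_mul (ha j) (hb j)
      (prod_le_prod hmin fun i _ => min_le_left _ _)
      (prod_le_prod hmin fun i _ => min_le_right _ _) ih

section Lattice

variable {ι α : Type*} [Fintype ι] [LinearOrder α]

lemma prod_add_prod_le_prod_sup_add_prod_inf {q : ι → α → R} (hq : ∀ i, Antitone (q i))
    (hq0 : ∀ i a, 0 ≤ q i a) (x y : ι → α) :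
    ∏ i, q i (x i) + ∏ i, q i (y i) ≤ ∏ i, q i ((x ⊔ y) i) + ∏ i, q i ((x ⊓ y) i) := by
  simp only [Pi.sup_apply, Pi.inf_apply, (hq _).map_max,
    (hq _).map_min]
  exact prod_add_prod_le_prod_min_add_prod_max _ (hq0 · _) (hq0 · _)

variable {V : Type*} [Fintype V]

/-- The expected total weight of the nodes visited by at least one walker, when walker `i`
takes `k i` steps and `P i u` is the probability that it visits `u` within a given number of
steps, the walkers being independent. -/
def expectedCoverage (σ : V → R) (P : ι → V → α → R) (k : ι → α) : R :=
  ∑ u, σ u * (1 - ∏ i, (1 - P i u (k i)))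

variable {σ : V → R} {P : ι → V → α → R}

lemma expectedCoverage_monotone (hσ : ∀ u, 0 ≤ σ u) (hP : ∀ i u, Monotone (P i u))
    (hP1 : ∀ i u a, P i u a ≤ 1) : Monotone (expectedCoverage σ P) := by
  intro x y hxy
  refine sum_le_sum fun u _ => mul_le_mul_of_nonneg_left ?_ (hσ u)
  have : ∏ i, (1 - P i u (y i)) ≤ ∏ i, (1 - P i u (x i)) :=
    prod_le_prod (fun i _ => sub_nonneg.2 (hP1 i u _))
      fun i _ => sub_le_sub_left (hP i u (hxy i)) 1
  linarith

lemma expectedCoverage_sup_add_inf_le (hσ : ∀ u, 0 ≤ σ u) (hP : ∀ i u, Monotone (P i u))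
    (hP1 : ∀ i u a, P i u a ≤ 1) (x y : ι → α) :
    expectedCoverage σ P (x ⊔ y) + expectedCoverage σ P (x ⊓ y) ≤
      expectedCoverage σ P x + expectedCoverage σ P y := by
  simp only [expectedCoverage, ← sum_add_distrib, ← mul_add]
  refine sum_le_sum fun u _ => mul_le_mul_of_nonneg_left ?_ (hσ u)
  have := prod_add_prod_le_prod_sup_add_prod_inf (q := fun i a => 1 - P i u a)
    (fun i _ _ h => sub_le_sub_left (hP i u h) 1) (fun i a => sub_nonneg.2 (hP1 i u a)) x y
  linarith

end Lattice

end

theorem stmt_2_general (m : ℕ) (V : Type*) [Fintype V]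
    (σ : V → ℝ) (hσ : ∀ u, 0 ≤ σ u)
    (P : Fin m → V → ℕ → ℝ)
    (hPmono : ∀ i u, Monotone (P i u))
    (hPbd : ∀ i u k, 0 ≤ P i u k ∧ P i u k ≤ 1)
    (r : (Fin m → ℕ) → ℝ)
    (hr : ∀ k, r k = ∑ u, σ u * (1 - ∏ i, (1 - P i u (k i)))) :
    Monotone r ∧ ∀ x y : Fin m → ℕ, r (x ⊔ y) + r (x ⊓ y) ≤ r x + r y := by
  obtain rfl : r = expectedCoverage σ P := funext hr
  have hP1 : ∀ i u k, P i u k ≤ 1 := fun i u k => (hPbd i u k).2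
  exact ⟨expectedCoverage_monotone hσ hPmono hP1,
    expectedCoverage_sup_add_inf_le hσ hPmono hP1⟩

/-- The reward function
`r k = Σ_u σ_u (1 − Π_i (1 − P_{i,u}(k_i)))` is monotone and submodular over
the integer lattice, provided each `P_{i,u}` is nondecreasing and `[0,1]`-valued
and the weights `σ` are nonnegative. -/
theorem stmt_2 (m : ℕ) (hm : 0 < m) (V : Type*) [Fintype V]
    (σ : V → ℝ) (hσ : ∀ u, 0 ≤ σ u)
    (P : Fin m → V → ℕ → ℝ)
    (hPmono : ∀ i u, Monotone (P i u))
    (hPbd : ∀ i u k, 0 ≤ P i u k ∧ P i u k ≤ 1)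
    (r : (Fin m → ℕ) → ℝ)
    (hr : ∀ k, r k = ∑ u, σ u * (1 - ∏ i, (1 - P i u (k i)))) :
    Monotone r ∧ ∀ x y : Fin m → ℕ, r (x ⊔ y) + r (x ⊓ y) ≤ r x + r y :=
  stmt_2_general m V σ hσ P hPmono hPbd r hr
end

section
/- Let m be a positive integer, V a finite set, σ : V → ℝ with σ_u ≥ 0 for all u, and for each i ∈ Fin m and u ∈ V let P_{i,u} : ℕ → ℝ satisfy: P_{i,u}(0) = 0, 0 ≤ P_{i,u}(k) ≤ 1 for all k, P_{i,u} is nondecreasing, and its increments are nonincreasing, i.e., P_{i,u}(k+2) − P_{i,u}(k+1) ≤ P_{i,u}(k+1) − P_{i,u}(k) for all k ∈ ℕ. Define r : (Fin m → ℕ) → ℝ by r(k) = Σ_{u∈V} σ_u (1 − Π_{i∈Fin m} (1 − P_{i,u}(k_i))). Then r is monotone and DR-submodular: for all x ≤ y (coordinatewise) and every i ∈ Fin m, r(y + χ_i) − r(y) ≤ r(x + χ_i) − r(x), where χ_i denotes the indicator vector of coordinate i. -/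
/-!
Fix a target `u`. Splitting off the factor of coordinate `i`, the marginal gain of
`k ↦ 1 - ∏ j, (1 - P j (k j))` in direction `i` is
`(P i (k i + 1) - P i (k i)) * ∏ j ≠ i, (1 - P j (k j))`.
Both factors are nonnegative and antitone in `k`: the first because `P i` has nonincreasing
increments, the second because each `P j` is monotone and bounded by `1`. Hence the gain
is antitone, which is DR-submodularity, and the property survives nonnegative combinations.
-/

open Finset

def DRSubmodular {ι : Type*} [DecidableEq ι] (f : (ι → ℕ) → ℝ) : Prop :=
  ∀ x y : ι → ℕ, x ≤ y → ∀ i, f (y + Pi.single i 1) - f y ≤ f (x + Pi.single i 1) - f x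

namespace DRSubmodular

variable {ι : Type*} [DecidableEq ι]

theorem const_mul {f : (ι → ℕ) → ℝ} (hf : DRSubmodular f) {c : ℝ} (hc : 0 ≤ c) :
    DRSubmodular fun x => c * f x := by
  intro x y hxy i
  simpa only [← mul_sub] using mul_le_mul_of_nonneg_left (hf x y hxy i) hc

theorem sum {α : Type*} {s : Finset α} {f : α → (ι → ℕ) → ℝ}
    (hf : ∀ a ∈ s, DRSubmodular (f a)) : DRSubmodular fun x => ∑ a ∈ s, f a x := by
  intro x y hxy i
  simp only [← sum_sub_distrib]
  exact sum_le_sum fun a ha => hf a ha x y hxy i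

end DRSubmodular

theorem antitone_prod_apply {ι α : Type*} [Preorder α] (s : Finset ι) {g : ι → α → ℝ}
    (hg₀ : ∀ j a, 0 ≤ g j a) (hg : ∀ j, Antitone (g j)) :
    Antitone fun z : ι → α => ∏ j ∈ s, g j (z j) :=
  fun _ _ hxy => prod_le_prod (fun j _ => hg₀ j _) (fun j _ => hg j (hxy j))

theorem prod_add_single_sub_prod {ι : Type*} [Fintype ι] [DecidableEq ι] (g : ι → ℕ → ℝ)
    (z : ι → ℕ) (i : ι) :
    ∏ j, g j ((z + Pi.single i 1 : ι → ℕ) j) - ∏ j, g j (z j) =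
      (g i (z i + 1) - g i (z i)) * ∏ j ∈ univ.erase i, g j (z j) := by
  have hrest : ∏ j ∈ univ.erase i, g j ((z + Pi.single i 1 : ι → ℕ) j) =
      ∏ j ∈ univ.erase i, g j (z j) :=
    prod_congr rfl fun j hj => by simp [Pi.single_eq_of_ne (ne_of_mem_erase hj)]
  rw [← mul_prod_erase univ _ (mem_univ i), ← mul_prod_erase univ _ (mem_univ i),
    hrest]
  simp only [Pi.add_apply, Pi.single_eq_same]
  ring

section Coverage

variable {ι : Type*} [Fintype ι] {P : ι → ℕ → ℝ}

theorem monotone_one_sub_prod_one_sub (hP₁ : ∀ i k, P i k ≤ 1) (hP : ∀ i, Monotone (P i)) :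
    Monotone fun k : ι → ℕ => 1 - ∏ i, (1 - P i (k i)) := by
  have hprod := antitone_prod_apply univ (g := fun i k => 1 - P i k)
    (fun i k => sub_nonneg.2 (hP₁ i k)) (fun i _ _ hab => sub_le_sub_left (hP i hab) 1)
  exact fun _ _ hxy => sub_le_sub_left (hprod hxy) 1

theorem drSubmodular_one_sub_prod_one_sub [DecidableEq ι] (hP₁ : ∀ i k, P i k ≤ 1)
    (hP : ∀ i, Monotone (P i)) (hPinc : ∀ i, Antitone fun k => P i (k + 1) - P i k) :
    DRSubmodular fun k : ι → ℕ => 1 - ∏ i, (1 - P i (k i)) := by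
  intro x y hxy i
  have hgain : ∀ z : ι → ℕ,
      (1 - ∏ j, (1 - P j ((z + Pi.single i 1 : ι → ℕ) j))) - (1 - ∏ j, (1 - P j (z j))) =
        (P i (z i + 1) - P i (z i)) * ∏ j ∈ univ.erase i, (1 - P j (z j)) := by
    intro z
    rw [sub_sub_sub_cancel_left, ← neg_sub, prod_add_single_sub_prod (fun j k => 1 - P j k)]
    ring
  have hrest := antitone_prod_apply (univ.erase i) (g := fun j k => 1 - P j k)
    (fun j k => sub_nonneg.2 (hP₁ j k)) (fun j _ _ hab => sub_le_sub_left (hP j hab) 1)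
  rw [hgain, hgain]
  exact mul_le_mul (hPinc i (hxy i)) (hrest hxy)
    (prod_nonneg fun j _ => sub_nonneg.2 (hP₁ j _))
    (sub_nonneg.2 (hP i (Nat.le_succ _)))

end Coverage

theorem stmt_3_general (m : ℕ) (V : Type*) [Fintype V]
    (σ : V → ℝ) (hσ : ∀ u, 0 ≤ σ u)
    (P : Fin m → V → ℕ → ℝ)
    (hPbd : ∀ i u k, 0 ≤ P i u k ∧ P i u k ≤ 1)
    (hPmono : ∀ i u, Monotone (P i u))
    (hPconc : ∀ i u k, P i u (k + 2) - P i u (k + 1) ≤ P i u (k + 1) - P i u k)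
    (r : (Fin m → ℕ) → ℝ)
    (hr : ∀ k, r k = ∑ u, σ u * (1 - ∏ i, (1 - P i u (k i)))) :
    Monotone r ∧ ∀ x y : Fin m → ℕ, x ≤ y → ∀ i : Fin m,
      r (y + Pi.single i 1) - r y ≤ r (x + Pi.single i 1) - r x := by
  obtain rfl : r = fun k => ∑ u, σ u * (1 - ∏ i, (1 - P i u (k i))) := funext hr
  have hP₁ : ∀ u i k, P i u k ≤ 1 := fun u i k => (hPbd i u k).2
  refine ⟨fun x y hxy => sum_le_sum fun u _ => ?_, ?_⟩
  · exact mul_le_mul_of_nonneg_left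
      (monotone_one_sub_prod_one_sub (hP₁ u) (fun i => hPmono i u) hxy) (hσ u)
  · exact DRSubmodular.sum fun u _ =>
      (drSubmodular_one_sub_prod_one_sub (hP₁ u) (fun i => hPmono i u)
        (fun i => antitone_nat_of_succ_le (hPconc i u))).const_mul (hσ u)

/-- If each `P_{i,u}` vanishes at 0, is `[0,1]`-valued,
nondecreasing and has nonincreasing increments, then the reward
`r k = Σ_u σ_u (1 − Π_i (1 − P_{i,u}(k_i)))` is monotone and DR-submodular. -/
theorem stmt_3 (m : ℕ) (hm : 0 < m) (V : Type*) [Fintype V]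
    (σ : V → ℝ) (hσ : ∀ u, 0 ≤ σ u)
    (P : Fin m → V → ℕ → ℝ)
    (hP0 : ∀ i u, P i u 0 = 0)
    (hPbd : ∀ i u k, 0 ≤ P i u k ∧ P i u k ≤ 1)
    (hPmono : ∀ i u, Monotone (P i u))
    (hPconc : ∀ i u k, P i u (k + 2) - P i u (k + 1) ≤ P i u (k + 1) - P i u k)
    (r : (Fin m → ℕ) → ℝ)
    (hr : ∀ k, r k = ∑ u, σ u * (1 - ∏ i, (1 - P i u (k i)))) :
    Monotone r ∧ ∀ x y : Fin m → ℕ, x ≤ y → ∀ i : Fin m,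
      r (y + Pi.single i 1) - r y ≤ r (x + Pi.single i 1) - r x :=
  stmt_3_general m V σ hσ P hPbd hPmono hPconc r hr
end

section
/- Let m be a positive integer. A function f : (Fin m → ℕ) → ℝ is submodular over the integer lattice (i.e., f(x ⊔ y) + f(x ⊓ y) ≤ f(x) + f(y) for all x, y) if and only if for all x ∈ (Fin m → ℕ) and all i ≠ j in Fin m, f(x + χ_i) − f(x) ≥ f(x + χ_j + χ_i) − f(x + χ_j), where χ_i denotes the one-hot vector with 1 in coordinate i and 0 elsewhere. -/
/-!
Adding the vector `v` to `x` one unit vector at a time, the local condition shows that the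
marginal gain `f (x + χ_i) - f x` can only decrease along any `v` with `v i = 0`. Writing
`x = a + u` and `y = a + v` with `a = x ⊓ y`, the vectors `u` and `v` have disjoint supports and
`x ⊔ y = a + u + v`; adding `u` one unit vector at a time and summing these marginal inequalities
gives `f (x ⊔ y) + f (x ⊓ y) ≤ f x + f y`.
-/

theorem Pi.induction_add_single_one {ι : Type*} [Finite ι] [DecidableEq ι]
    {P : (ι → ℕ) → Prop} (zero : P 0) (add_single : ∀ v i, P v → P (v + Pi.single i 1))
    (v : ι → ℕ) : P v := by
  suffices h : ∀ u, P u → P (u + v) by simpa using h 0 zero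
  induction v using Pi.single_induction with
  | zero => simp
  | add v w hv hw => exact fun u hu => add_assoc u v w ▸ hw _ (hv u hu)
  | single i n =>
    intro u hu
    induction n with
    | zero => simpa using hu
    | succ n ih =>
      rw [Pi.single_add, ← add_assoc]
      exact add_single _ i ih

section LatticeSubmodular

variable {ι β : Type*} [DecidableEq ι] [AddCommGroup β] [PartialOrder β] {f : (ι → ℕ) → β}

theorem local_of_submodular [IsOrderedAddMonoid β]
    (hf : ∀ x y : ι → ℕ, f (x ⊔ y) + f (x ⊓ y) ≤ f x + f y)
    (x : ι → ℕ) {i j : ι} (hij : i ≠ j) :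
    f (x + Pi.single j 1 + Pi.single i 1) - f (x + Pi.single j 1) ≤
      f (x + Pi.single i 1) - f x := by
  have hsup : (x + Pi.single i 1) ⊔ (x + Pi.single j 1) = x + Pi.single j 1 + Pi.single i 1 := by
    ext k
    simp only [Pi.sup_apply, Pi.add_apply, Pi.single_apply]
    split_ifs <;> simp_all
  have hinf : (x + Pi.single i 1) ⊓ (x + Pi.single j 1) = x := by
    ext k
    simp only [Pi.inf_apply, Pi.add_apply, Pi.single_apply]
    split_ifs <;> simp_all
  have key := hf (x + Pi.single i 1) (x + Pi.single j 1)
  rw [hsup, hinf] at key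
  exact sub_le_sub_iff.2 key

variable [Finite ι]

theorem marginal_antitone_of_local
    (hf : ∀ (x : ι → ℕ) (i j : ι), i ≠ j →
      f (x + Pi.single j 1 + Pi.single i 1) - f (x + Pi.single j 1) ≤
        f (x + Pi.single i 1) - f x)
    {i : ι} (x : ι → ℕ) {v : ι → ℕ} (hv : v i = 0) :
    f (x + v + Pi.single i 1) - f (x + v) ≤ f (x + Pi.single i 1) - f x := by
  induction v using Pi.induction_add_single_one with
  | zero => simp
  | add_single v j ih =>
    have hji : j ≠ i := by rintro rfl; simp at hv
    have hvi : v i = 0 := by simpa [Pi.single_apply, hji.symm] using hv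
    rw [← add_assoc]
    exact (hf (x + v) i j hji.symm).trans (ih hvi)

theorem add_add_le_of_local [IsOrderedAddMonoid β]
    (hf : ∀ (x : ι → ℕ) (i j : ι), i ≠ j →
      f (x + Pi.single j 1 + Pi.single i 1) - f (x + Pi.single j 1) ≤
        f (x + Pi.single i 1) - f x)
    (a : ι → ℕ) {u v : ι → ℕ} (huv : ∀ k, u k = 0 ∨ v k = 0) :
    f (a + u + v) + f a ≤ f (a + u) + f (a + v) := by
  induction u using Pi.induction_add_single_one with
  | zero => simpa using (add_comm _ _).le
  | add_single u i ih =>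
    have hvi : v i = 0 := (huv i).resolve_left (by simp)
    have hgain := sub_le_sub_iff.1 (marginal_antitone_of_local hf (a + u) hvi)
    have hprev := ih fun k => (huv k).imp_left fun h => by simp_all
    rw [← add_assoc, add_right_comm]
    refine le_of_add_le_add_right (a := f (a + u + v) + f (a + u)) ?_
    calc f (a + u + v + Pi.single i 1) + f a + (f (a + u + v) + f (a + u))
        = f (a + u + v + Pi.single i 1) + f (a + u) + (f (a + u + v) + f a) := by abel
      _ ≤ f (a + u + Pi.single i 1) + f (a + u + v) + (f (a + u) + f (a + v)) :=
          add_le_add hgain hprev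
      _ = f (a + u + Pi.single i 1) + f (a + v) + (f (a + u + v) + f (a + u)) := by abel

theorem submodular_of_local [IsOrderedAddMonoid β]
    (hf : ∀ (x : ι → ℕ) (i j : ι), i ≠ j →
      f (x + Pi.single j 1 + Pi.single i 1) - f (x + Pi.single j 1) ≤
        f (x + Pi.single i 1) - f x)
    (x y : ι → ℕ) : f (x ⊔ y) + f (x ⊓ y) ≤ f x + f y := by
  have hsup : x ⊔ y = x + (y - x ⊓ y) := by
    ext k; simp only [Pi.add_apply, Pi.sub_apply, Pi.sup_apply, Pi.inf_apply]; omega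
  have key := add_add_le_of_local hf (x ⊓ y) (u := x - x ⊓ y) (v := y - x ⊓ y)
    fun k => by simp only [Pi.sub_apply, Pi.inf_apply]; omega
  rwa [add_tsub_cancel_of_le inf_le_left, add_tsub_cancel_of_le inf_le_right, ← hsup] at key

end LatticeSubmodular

theorem stmt_4_general (m : ℕ) (f : (Fin m → ℕ) → ℝ) :
    (∀ x y : Fin m → ℕ, f (x ⊔ y) + f (x ⊓ y) ≤ f x + f y) ↔
      (∀ (x : Fin m → ℕ) (i j : Fin m), i ≠ j →
        f (x + Pi.single j 1 + Pi.single i 1) - f (x + Pi.single j 1) ≤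
          f (x + Pi.single i 1) - f x) :=
  ⟨fun hf x _ _ hij => local_of_submodular hf x hij, submodular_of_local⟩

/-- Local characterization of lattice submodularity:
`f` is submodular over the integer lattice iff
`f(x + χ_i) − f(x) ≥ f(x + χ_j + χ_i) − f(x + χ_j)` for all `x` and `i ≠ j`. -/
theorem stmt_4 (m : ℕ) (hm : 0 < m) (f : (Fin m → ℕ) → ℝ) :
    (∀ x y : Fin m → ℕ, f (x ⊔ y) + f (x ⊓ y) ≤ f x + f y) ↔
      (∀ (x : Fin m → ℕ) (i j : Fin m), i ≠ j →
        f (x + Pi.single j 1 + Pi.single i 1) - f (x + Pi.single j 1) ≤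
          f (x + Pi.single i 1) - f x) :=
  stmt_4_general m f
end

section
/- Let m be a positive integer and f : (Fin m → ℕ) → ℝ be submodular over the integer lattice. Then for all x, y ∈ (Fin m → ℕ), f(x ⊔ y) ≤ f(x) + Σ_{i : y_i > x_i} ( f(x + (y_i − x_i)·χ_i) − f(x) ), where the sum ranges over coordinates i ∈ Fin m with y_i > x_i, χ_i denotes the one-hot vector of coordinate i, and ⊔ denotes the coordinatewise maximum. -/
/-!
Raising `x` to `x ⊔ y` one coordinate at a time, the increments `x + (y i - x i) χ_i` pairwise
meet in `x`. In a distributive lattice the join of the first few of them therefore still meets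
the next one in `x`, so submodularity bounds each marginal gain by the gain of that single
increment over `x`; summing these bounds telescopes to the claim.
-/

open Finset

theorem apply_sup_finsetSup_le_of_submodular {L β ι : Type*} [DistribLattice L] [OrderBot L]
    [AddCommGroup β] [PartialOrder β] [IsOrderedAddMonoid β] [DecidableEq ι]
    {f : L → β} (hf : ∀ a b, f (a ⊔ b) + f (a ⊓ b) ≤ f a + f b)
    {x : L} {z : ι → L} (s : Finset ι) (hxz : ∀ i ∈ s, x ≤ z i)
    (hz : ∀ i ∈ s, ∀ j ∈ s, i ≠ j → z i ⊓ z j = x) :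
    f (x ⊔ s.sup z) ≤ f x + ∑ i ∈ s, (f (z i) - f x) := by
  induction s using Finset.induction with
  | empty => simp
  | @insert j s hj ih =>
    have hinf : (x ⊔ s.sup z) ⊓ z j = x := by
      rw [inf_sup_right, sup_inf_distrib_right, inf_eq_left.2 (hxz j (mem_insert_self j s))]
      refine sup_eq_left.2 (Finset.sup_le fun i hi => ?_)
      rw [hz i (mem_insert_of_mem hi) j (mem_insert_self j s) (ne_of_mem_of_not_mem hi hj)]
    have hs := ih (fun i hi => hxz i (mem_insert_of_mem hi))
      (fun i hi k hk => hz i (mem_insert_of_mem hi) k (mem_insert_of_mem hk))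
    have hstep := hf (x ⊔ s.sup z) (z j)
    rw [hinf, sup_assoc, sup_comm (s.sup z), ← sup_insert] at hstep
    calc f (x ⊔ (insert j s).sup z) ≤ f (x ⊔ s.sup z) + (f (z j) - f x) := by
          rw [← sub_nonneg] at hstep ⊢; convert hstep using 1; abel
      _ ≤ f x + ∑ i ∈ s, (f (z i) - f x) + (f (z j) - f x) := add_le_add_left hs _
      _ = f x + ∑ i ∈ insert j s, (f (z i) - f x) := by rw [sum_insert hj]; abel

theorem Pi.add_single_inf_add_single {ι : Type*} [DecidableEq ι] (x : ι → ℕ) {i j : ι}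
    (hij : i ≠ j) (a b : ℕ) : (x + Pi.single i a) ⊓ (x + Pi.single j b) = x := by
  ext k
  by_cases hk : k = i
  · subst hk; simp [Pi.single_eq_of_ne hij]
  · simp [Pi.single_eq_of_ne hk]

theorem Pi.sup_finsetSup_add_single_sub {ι : Type*} [Fintype ι] [DecidableEq ι]
    (x y : ι → ℕ) :
    x ⊔ (univ.filter fun i => x i < y i).sup (fun i => x + Pi.single i (y i - x i)) = x ⊔ y := by
  refine le_antisymm (sup_le le_sup_left (Finset.sup_le fun i _ k => ?_))
    (sup_le le_sup_left fun k => ?_)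
  · by_cases hk : k = i
    · subst hk; simp only [Pi.add_apply, Pi.single_eq_same, Pi.sup_apply]; omega
    · simp [Pi.single_eq_of_ne hk]
  · by_cases hk : x k < y k
    · have hle := Finset.le_sup (f := fun i => x + Pi.single i (y i - x i))
        (s := univ.filter fun i => x i < y i) (mem_filter.2 ⟨mem_univ k, hk⟩)
      refine le_sup_of_le_right (le_trans ?_ (hle k))
      simp only [Pi.add_apply, Pi.single_eq_same]; omega
    · exact le_sup_of_le_left (not_lt.1 hk)

theorem stmt_6_general (m : ℕ) (f : (Fin m → ℕ) → ℝ)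
    (hsub : ∀ x y : Fin m → ℕ, f (x ⊔ y) + f (x ⊓ y) ≤ f x + f y)
    (x y : Fin m → ℕ) :
    f (x ⊔ y) ≤ f x +
      ∑ i ∈ Finset.univ.filter (fun i => x i < y i),
        (f (x + Pi.single i (y i - x i)) - f x) := by
  rw [← Pi.sup_finsetSup_add_single_sub]
  exact apply_sup_finsetSup_le_of_submodular hsub _ (fun i _ => le_self_add)
    (fun i _ j _ hij => Pi.add_single_inf_add_single x hij _ _)

/-- decomposition lemma for lattice-submodular functions:
`f(x ⊔ y) ≤ f(x) + Σ_{i : y_i > x_i} (f(x + (y_i − x_i)·χ_i) − f(x))`. -/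
theorem stmt_6 (m : ℕ) (hm : 0 < m) (f : (Fin m → ℕ) → ℝ)
    (hsub : ∀ x y : Fin m → ℕ, f (x ⊔ y) + f (x ⊓ y) ≤ f x + f y)
    (x y : Fin m → ℕ) :
    f (x ⊔ y) ≤ f x +
      ∑ i ∈ Finset.univ.filter (fun i => x i < y i),
        (f (x + Pi.single i (y i - x i)) - f x) :=
  stmt_6_general m f hsub x y
end

section
/- Let m be a positive integer and f : (Fin m → ℕ) → ℝ be monotone and submodular over the integer lattice. Let x, y ∈ (Fin m → ℕ) and let δ ≥ 0 be a real number such that for every coordinate i ∈ Fin m with y_i > x_i, f(x + (y_i − x_i)·χ_i) − f(x) ≤ (y_i − x_i)·δ. Then f(y) ≤ f(x) + (Σ_{i : y_i > x_i} (y_i − x_i)) · δ. -/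
/-!
Let `v i = x + (y i - x i) χ_i` for the coordinates with `x i < y i`. Any two of these
meet in `x`, so by distributivity `x ⊔ v_{i₁} ⊔ … ⊔ v_{iₖ}` meets the next `v` in `x`, and
submodularity adds the gain `f (v i) - f x` of one coordinate at a time. The join of all
`v i` dominates `y`, so monotonicity finishes.
-/

open Finset

section Submodular

variable {α β ι : Type*} [DistribLattice α] [OrderBot α]
  [AddCommGroup β] [PartialOrder β] [IsOrderedAddMonoid β]

theorem apply_sup_finsetSup_le_of_submodular_s8 {f : α → β}
    (hsub : ∀ a b, f (a ⊔ b) + f (a ⊓ b) ≤ f a + f b) (x : α) (v : ι → α) (s : Finset ι)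
    (hx : ∀ i ∈ s, x ≤ v i) (hv : (s : Set ι).Pairwise fun i j => v i ⊓ v j ≤ x) :
    f (x ⊔ s.sup v) ≤ f x + ∑ i ∈ s, (f (v i) - f x) := by
  classical
  induction s using Finset.induction_on with
  | empty => simp
  | insert a s ha ih =>
    have hinf : (x ⊔ s.sup v) ⊓ v a = x := by
      refine le_antisymm ?_ (le_inf le_sup_left (hx a (mem_insert_self a s)))
      rw [inf_sup_right, sup_inf_distrib_right]
      refine sup_le inf_le_left (Finset.sup_le fun i hi => ?_)
      exact hv (mem_insert_of_mem hi) (mem_insert_self a s) (ne_of_mem_of_not_mem hi ha)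
    have hstep : f (x ⊔ s.sup v ⊔ v a) + f x ≤ f (x ⊔ s.sup v) + f (v a) := by
      simpa only [hinf] using hsub (x ⊔ s.sup v) (v a)
    have hs := ih (fun i hi => hx i (mem_insert_of_mem hi)) (hv.mono (by simp))
    rw [sup_insert, sup_left_comm, sup_comm (v a), sum_insert ha]
    calc f (x ⊔ s.sup v ⊔ v a) ≤ f (x ⊔ s.sup v) + (f (v a) - f x) := by
          rwa [← add_sub_assoc, le_sub_iff_add_le]
      _ ≤ f x + ∑ i ∈ s, (f (v i) - f x) + (f (v a) - f x) := by gcongr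
      _ = f x + (f (v a) - f x + ∑ i ∈ s, (f (v i) - f x)) := by abel

end Submodular

section NatLattice

variable {ι : Type*} [DecidableEq ι]

theorem add_single_inf_add_single_le (x : ι → ℕ) {i j : ι} (hij : i ≠ j) (a b : ℕ) :
    (x + Pi.single i a) ⊓ (x + Pi.single j b) ≤ x := fun k => by
  by_cases hk : k = i
  · subst hk
    simp [hij.symm]
  · simp [Pi.single_apply, hk]

theorem le_sup_finsetSup_add_single (x y : ι → ℕ) (s : Finset ι)
    (hs : ∀ i, x i < y i → i ∈ s) :
    y ≤ x ⊔ s.sup fun i => x + Pi.single i (y i - x i) := fun k => by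
  by_cases hk : x k < y k
  · have hle : x + Pi.single k (y k - x k) ≤ s.sup fun i => x + Pi.single i (y i - x i) :=
      Finset.le_sup (f := fun i => x + Pi.single i (y i - x i)) (hs k hk)
    refine le_sup_of_le_right (le_trans ?_ (hle k))
    simp only [Pi.add_apply, Pi.single_eq_same]
    omega
  · exact le_sup_of_le_left (not_lt.mp hk)

end NatLattice

theorem stmt_8_general (m : ℕ) (f : (Fin m → ℕ) → ℝ)
    (hmono : Monotone f)
    (hsub : ∀ x y : Fin m → ℕ, f (x ⊔ y) + f (x ⊓ y) ≤ f x + f y)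
    (x y : Fin m → ℕ) (δ : ℝ)
    (h : ∀ i : Fin m, x i < y i →
      f (x + Pi.single i (y i - x i)) - f x ≤ ((y i - x i : ℕ) : ℝ) * δ) :
    f y ≤ f x +
      (∑ i ∈ Finset.univ.filter (fun i => x i < y i), ((y i - x i : ℕ) : ℝ)) * δ := by
  set s := Finset.univ.filter fun i => x i < y i
  set v : Fin m → Fin m → ℕ := fun i => x + Pi.single i (y i - x i)
  calc f y ≤ f (x ⊔ s.sup v) :=
        hmono (le_sup_finsetSup_add_single x y s fun i hi => by simp [s, hi])
    _ ≤ f x + ∑ i ∈ s, (f (v i) - f x) :=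
        apply_sup_finsetSup_le_of_submodular_s8 hsub x v s (fun i _ => le_add_of_nonneg_right bot_le)
          fun i _ j _ hij => add_single_inf_add_single_le x hij _ _
    _ ≤ f x + ∑ i ∈ s, ((y i - x i : ℕ) : ℝ) * δ := by
        gcongr with i hi
        exact h i (mem_filter.mp hi).2
    _ = _ := by rw [sum_mul]

/-- per-unit marginal-gain bound for monotone lattice-submodular
functions: if each single-coordinate jump from `x` towards `y` has per-unit
gain at most `δ`, then `f(y) ≤ f(x) + (Σ_{i : y_i > x_i} (y_i − x_i)) · δ`. -/
theorem stmt_8 (m : ℕ) (hm : 0 < m) (f : (Fin m → ℕ) → ℝ)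
    (hmono : Monotone f)
    (hsub : ∀ x y : Fin m → ℕ, f (x ⊔ y) + f (x ⊓ y) ≤ f x + f y)
    (x y : Fin m → ℕ) (δ : ℝ) (hδ : 0 ≤ δ)
    (h : ∀ i : Fin m, x i < y i →
      f (x + Pi.single i (y i - x i)) - f x ≤ ((y i - x i : ℕ) : ℝ) * δ) :
    f y ≤ f x +
      (∑ i ∈ Finset.univ.filter (fun i => x i < y i), ((y i - x i : ℕ) : ℝ)) * δ :=
  stmt_8_general m f hmono hsub x y δ h
end

section
/- Let B > 0 and η ∈ [0,1] be real numbers, r* ≥ 0, and let b_1, …, b_s be real numbers with 0 < b_j ≤ B for each j and Σ_{j=1}^{s} b_j ≥ η·B. Let r_1, …, r_{s+1} be real numbers with r_1 = 0 and r_{j+1} ≥ (1 − b_j/B)·r_j + (b_j/B)·r* for every j = 1, …, s. Then r_{s+1} ≥ (1 − e^{−η})·r*. -/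
/-! Writing `a j = b j / B`, each greedy step shrinks the gap `r* - r j` by the factor `1 - a j ∈ [0, 1]`,
so the final gap is at most `r* · ∏ (1 - a j) ≤ r* · exp (-∑ a j) ≤ r* · e^{-η}`, using `1 - x ≤ e^{-x}`. -/

open Finset Real

theorem Finset.prod_one_sub_le_exp_neg_sum {ι : Type*} (s : Finset ι) (a : ι → ℝ)
    (ha : ∀ i ∈ s, a i ≤ 1) : ∏ i ∈ s, (1 - a i) ≤ exp (-∑ i ∈ s, a i) := by
  rw [← sum_neg_distrib, exp_sum]
  exact prod_le_prod (fun i hi => sub_nonneg.mpr (ha i hi)) fun i _ => one_sub_le_exp_neg (a i)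

theorem le_prod_one_sub_mul_of_le_one_sub_mul (a g : ℕ → ℝ) (k : ℕ)
    (ha : ∀ i ∈ Icc 1 k, a i ≤ 1) (hg : ∀ i ∈ Icc 1 k, g (i + 1) ≤ (1 - a i) * g i) :
    g (k + 1) ≤ (∏ i ∈ Icc 1 k, (1 - a i)) * g 1 := by
  induction k with
  | zero => simp
  | succ k ih =>
    have hk : k + 1 ∈ Icc 1 (k + 1) := mem_Icc.mpr ⟨k.succ_pos, le_rfl⟩
    have hsub : Icc 1 k ⊆ Icc 1 (k + 1) := Icc_subset_Icc_right k.le_succ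
    calc g (k + 1 + 1) ≤ (1 - a (k + 1)) * g (k + 1) := hg _ hk
      _ ≤ (1 - a (k + 1)) * ((∏ i ∈ Icc 1 k, (1 - a i)) * g 1) :=
        mul_le_mul_of_nonneg_left (ih (fun i hi => ha i (hsub hi)) fun i hi => hg i (hsub hi))
          (sub_nonneg.mpr (ha _ hk))
      _ = (∏ i ∈ Icc 1 (k + 1), (1 - a i)) * g 1 := by
        rw [prod_Icc_succ_top k.succ_pos]; ring

theorem stmt_12_general (B η : ℝ) (hB : 0 < B)
    (rstar : ℝ) (hrstar : 0 ≤ rstar) (s : ℕ)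
    (b r : ℕ → ℝ)
    (hb : ∀ j ∈ Finset.Icc 1 s, 0 < b j ∧ b j ≤ B)
    (hsum : η * B ≤ ∑ j ∈ Finset.Icc 1 s, b j)
    (hr1 : r 1 = 0)
    (hrec : ∀ j ∈ Finset.Icc 1 s,
      (1 - b j / B) * r j + (b j / B) * rstar ≤ r (j + 1)) :
    (1 - Real.exp (-η)) * rstar ≤ r (s + 1) := by
  have ha : ∀ j ∈ Icc 1 s, b j / B ≤ 1 := fun j hj => (div_le_one hB).mpr (hb j hj).2
  have hgap : rstar - r (s + 1) ≤ (∏ j ∈ Icc 1 s, (1 - b j / B)) * (rstar - r 1) :=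
    le_prod_one_sub_mul_of_le_one_sub_mul (fun j => b j / B) (fun j => rstar - r j) s ha
      fun j hj => by linarith [hrec j hj]
  have hη : η ≤ ∑ j ∈ Icc 1 s, b j / B := by
    rw [← sum_div, le_div_iff₀ hB]; exact hsum
  have hprod : ∏ j ∈ Icc 1 s, (1 - b j / B) ≤ exp (-η) :=
    (prod_one_sub_le_exp_neg_sum _ _ ha).trans (exp_le_exp.mpr (neg_le_neg hη))
  rw [hr1, sub_zero] at hgap
  linarith [mul_le_mul_of_nonneg_right hprod hrstar]

/-- Case 1 of the approximation analysis of the budget-effective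
greedy algorithm: starting from reward 0, with recursive greedy improvement and
greedy budgets summing to at least `η·B`, the final reward is at least
`(1 − e^{−η})·r*`. -/
theorem stmt_12 (B η : ℝ) (hB : 0 < B) (hη : η ∈ Set.Icc (0 : ℝ) 1)
    (rstar : ℝ) (hrstar : 0 ≤ rstar) (s : ℕ)
    (b r : ℕ → ℝ)
    (hb : ∀ j ∈ Finset.Icc 1 s, 0 < b j ∧ b j ≤ B)
    (hsum : η * B ≤ ∑ j ∈ Finset.Icc 1 s, b j)
    (hr1 : r 1 = 0)
    (hrec : ∀ j ∈ Finset.Icc 1 s,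
      (1 - b j / B) * r j + (b j / B) * rstar ≤ r (j + 1)) :
    (1 - Real.exp (-η)) * rstar ≤ r (s + 1) :=
  stmt_12_general B η hB rstar hrstar s b r hb hsum hr1 hrec
end

section
/- Let m be a positive integer, V a finite set, and let σ, σ' : V → ℝ and μ, μ' : Fin m → V → ℕ → ℝ all take values in [0,1]. Then for every k ∈ (Fin m → ℕ), | Σ_{u∈V} σ_u (1 − Π_{i∈Fin m} (1 − μ_{i,u}(k_i))) − Σ_{u∈V} σ'_u (1 − Π_{i∈Fin m} (1 − μ'_{i,u}(k_i))) | ≤ Σ_{i∈Fin m} Σ_{u∈V} ( σ_u · |μ_{i,u}(k_i) − μ'_{i,u}(k_i)| + |σ_u − σ'_u| · μ'_{i,u}(k_i) ). -/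
/-!
Write `A_u = 1 - ∏ i, (1 - μ_{i,u})` for the probability that node `u` is visited. Splitting
`σ A - σ' A' = σ (A - A') + (σ - σ') A'`, the first term is controlled by the telescoping bound
`|∏ a_i - ∏ b_i| ≤ ∑ |a_i - b_i|` for factors of norm at most one, and the second by the union
bound `A' ≤ ∑ i, μ'_i`, which is the same telescoping bound against the constant factors `1`.
-/

open Finset

theorem Finset.norm_prod_sub_prod_le_sum_norm_sub {ι R : Type*} [NormedCommRing R]
    [NormOneClass R] (s : Finset ι) (f g : ι → R)
    (hf : ∀ i ∈ s, ‖f i‖ ≤ 1) (hg : ∀ i ∈ s, ‖g i‖ ≤ 1) :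
    ‖∏ i ∈ s, f i - ∏ i ∈ s, g i‖ ≤ ∑ i ∈ s, ‖f i - g i‖ := by
  classical
  induction s using Finset.induction with
  | empty => simp
  | insert a s ha ih =>
    rw [forall_mem_insert] at hf hg
    have hprod_g : ‖∏ i ∈ s, g i‖ ≤ 1 :=
      (norm_prod_le s g).trans (prod_le_one (fun _ _ => norm_nonneg _) hg.2)
    have hsplit : f a * ∏ i ∈ s, f i - g a * ∏ i ∈ s, g i =
        f a * (∏ i ∈ s, f i - ∏ i ∈ s, g i) + (f a - g a) * ∏ i ∈ s, g i := by ring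
    rw [prod_insert ha, prod_insert ha, sum_insert ha, hsplit]
    calc _ ≤ ‖f a‖ * ‖∏ i ∈ s, f i - ∏ i ∈ s, g i‖ + ‖f a - g a‖ * ‖∏ i ∈ s, g i‖ :=
          (norm_add_le _ _).trans (add_le_add (norm_mul_le _ _) (norm_mul_le _ _))
      _ ≤ 1 * ∑ i ∈ s, ‖f i - g i‖ + ‖f a - g a‖ * 1 := by
          gcongr
          exacts [hf.1, ih hf.2 hg.2]
      _ = _ := by ring

theorem Finset.abs_one_sub_prod_one_sub_sub_le {ι : Type*} (s : Finset ι)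
    (p q : ι → ℝ) (hp : ∀ i ∈ s, p i ∈ Set.Icc 0 1) (hq : ∀ i ∈ s, q i ∈ Set.Icc 0 1) :
    |(1 - ∏ i ∈ s, (1 - p i)) - (1 - ∏ i ∈ s, (1 - q i))| ≤ ∑ i ∈ s, |p i - q i| := by
  have hnorm : ∀ x ∈ Set.Icc (0 : ℝ) 1, ‖1 - x‖ ≤ 1 := fun x ⟨h0, h1⟩ => by
    rw [Real.norm_eq_abs, abs_le]; constructor <;> linarith
  calc _ = ‖∏ i ∈ s, (1 - q i) - ∏ i ∈ s, (1 - p i)‖ := by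
        rw [Real.norm_eq_abs]; ring_nf
    _ ≤ ∑ i ∈ s, ‖(1 - q i) - (1 - p i)‖ :=
        norm_prod_sub_prod_le_sum_norm_sub s _ _ (fun i hi => hnorm _ (hq i hi))
          (fun i hi => hnorm _ (hp i hi))
    _ = ∑ i ∈ s, |p i - q i| := by
        simp only [Real.norm_eq_abs, sub_sub_sub_cancel_left]

theorem Finset.one_sub_prod_one_sub_le_sum {ι : Type*} (s : Finset ι)
    (p : ι → ℝ) (hp : ∀ i ∈ s, p i ∈ Set.Icc 0 1) :
    1 - ∏ i ∈ s, (1 - p i) ≤ ∑ i ∈ s, p i := by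
  have h := abs_one_sub_prod_one_sub_sub_le s p 0 hp (fun _ _ => ⟨le_rfl, zero_le_one⟩)
  simp only [Pi.zero_apply, sub_zero, prod_const_one, sub_self] at h
  calc _ ≤ ∑ i ∈ s, |p i| := (le_abs_self _).trans h
    _ = ∑ i ∈ s, p i := sum_congr rfl fun i hi => abs_of_nonneg (hp i hi).1

theorem Finset.one_sub_prod_one_sub_nonneg {ι : Type*} (s : Finset ι) (p : ι → ℝ)
    (hp : ∀ i ∈ s, p i ∈ Set.Icc 0 1) :
    0 ≤ 1 - ∏ i ∈ s, (1 - p i) :=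
  sub_nonneg.2 <| prod_le_one (fun i hi => sub_nonneg.2 (hp i hi).2)
    (fun i hi => sub_le_self _ (hp i hi).1)

theorem abs_mul_sub_mul_le {a a' x x' : ℝ} (ha : 0 ≤ a) (hx' : 0 ≤ x') :
    |a * x - a' * x'| ≤ a * |x - x'| + |a - a'| * x' := by
  calc |a * x - a' * x'| = |a * (x - x') + (a - a') * x'| := by ring_nf
    _ ≤ |a * (x - x')| + |(a - a') * x'| := abs_add_le _ _
    _ = a * |x - x'| + |a - a'| * x' := by rw [abs_mul, abs_mul, abs_of_nonneg ha, abs_of_nonneg hx']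

theorem stmt_14_general (m : ℕ) (V : Type*) [Fintype V]
    (σ σ' : V → ℝ) (μ μ' : Fin m → V → ℕ → ℝ)
    (hσ : ∀ u, 0 ≤ σ u ∧ σ u ≤ 1)
    (hμ : ∀ i u b, 0 ≤ μ i u b ∧ μ i u b ≤ 1)
    (hμ' : ∀ i u b, 0 ≤ μ' i u b ∧ μ' i u b ≤ 1)
    (k : Fin m → ℕ) :
    |∑ u, σ u * (1 - ∏ i, (1 - μ i u (k i))) -
        ∑ u, σ' u * (1 - ∏ i, (1 - μ' i u (k i)))| ≤
      ∑ i : Fin m, ∑ u : V,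
        (σ u * |μ i u (k i) - μ' i u (k i)| + |σ u - σ' u| * μ' i u (k i)) := by
  rw [sum_comm, ← sum_sub_distrib]
  refine (abs_sum_le_sum_abs _ _).trans (sum_le_sum fun u _ => ?_)
  have hp : ∀ i ∈ univ, μ i u (k i) ∈ Set.Icc 0 1 := fun i _ => hμ i u (k i)
  have hq : ∀ i ∈ univ, μ' i u (k i) ∈ Set.Icc 0 1 := fun i _ => hμ' i u (k i)
  calc _ ≤ σ u * |(1 - ∏ i, (1 - μ i u (k i))) - (1 - ∏ i, (1 - μ' i u (k i)))| +
          |σ u - σ' u| * (1 - ∏ i, (1 - μ' i u (k i))) :=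
        abs_mul_sub_mul_le (hσ u).1 (one_sub_prod_one_sub_nonneg _ _ hq)
    _ ≤ σ u * ∑ i, |μ i u (k i) - μ' i u (k i)| + |σ u - σ' u| * ∑ i, μ' i u (k i) := by
        gcongr
        exacts [(hσ u).1, abs_one_sub_prod_one_sub_sub_le _ _ _ hp hq,
          one_sub_prod_one_sub_le_sum _ _ hq]
    _ = _ := by rw [mul_sum, mul_sum, ← sum_add_distrib]

/-- Property 2, 1-Norm Bounded Smoothness of the reward. -/
theorem stmt_14 (m : ℕ) (hm : 0 < m) (V : Type*) [Fintype V]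
    (σ σ' : V → ℝ) (μ μ' : Fin m → V → ℕ → ℝ)
    (hσ : ∀ u, 0 ≤ σ u ∧ σ u ≤ 1) (hσ' : ∀ u, 0 ≤ σ' u ∧ σ' u ≤ 1)
    (hμ : ∀ i u b, 0 ≤ μ i u b ∧ μ i u b ≤ 1)
    (hμ' : ∀ i u b, 0 ≤ μ' i u b ∧ μ' i u b ≤ 1)
    (k : Fin m → ℕ) :
    |∑ u, σ u * (1 - ∏ i, (1 - μ i u (k i))) -
        ∑ u, σ' u * (1 - ∏ i, (1 - μ' i u (k i)))| ≤
      ∑ i : Fin m, ∑ u : V,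
        (σ u * |μ i u (k i) - μ' i u (k i)| + |σ u - σ' u| * μ' i u (k i)) :=
  stmt_14_general m V σ σ' μ μ' hσ hμ hμ' k
end

section
/- Let m be a positive integer, c ∈ (Fin m → ℕ) a vector of per-layer budget constraints, B ∈ ℕ with B ≤ Σ_i c_i, and for each i ∈ Fin m let g_i : ℕ → ℝ be nonincreasing on {1, …, c_i} (i.e., g_i(b+1) ≤ g_i(b) for 1 ≤ b < c_i). Then the maximum of Σ_{i∈Fin m} Σ_{b=1}^{k_i} g_i(b) over all k ∈ (Fin m → ℕ) with k_i ≤ c_i for all i and Σ_i k_i = B equals the maximum of Σ_{(i,b)∈S} g_i(b) over all subsets S of {(i,b) : i ∈ Fin m, 1 ≤ b ≤ c_i} of cardinality B. -/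
/-!
An allocation `k` is the same thing as the set of budget units `(i, b)` with `1 ≤ b ≤ k i`, and
both have the same value, so every allocation value is a subset value. Conversely, a set `S` of
units spends `kᵢ = #{b | (i, b) ∈ S}` units on layer `i`; as `gᵢ` is nonincreasing, the first
`kᵢ` units of layer `i` are worth at least the ones `S` picks there. So each subset value is
dominated by an allocation value of the same total budget, and the two suprema agree.
-/

open Finset

lemma antitoneOn_Icc_one_of_succ_le {β : Type*} [Preorder β] {f : ℕ → β} {c : ℕ}
    (hf : ∀ b, 1 ≤ b → b < c → f (b + 1) ≤ f b) : AntitoneOn f (Set.Icc 1 c) :=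
  antitoneOn_of_succ_le Set.ordConnected_Icc fun b _ hb hsb =>
    hf b hb.1 (Order.succ_le_iff.1 hsb.2)

lemma sum_le_sum_Icc_one_card {M : Type*} [AddCommMonoid M] [PartialOrder M]
    [IsOrderedAddMonoid M] {f : ℕ → M} {c : ℕ} (hf : AntitoneOn f (Set.Icc 1 c))
    {F : Finset ℕ} (hF : F ⊆ Icc 1 c) : ∑ b ∈ F, f b ≤ ∑ b ∈ Icc 1 #F, f b := by
  induction F using Finset.induction_on_max with
  | empty => simp
  | insert a s hlt ih =>
    have ha : a ∉ s := fun h => lt_irrefl a (hlt a h)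
    obtain ⟨ha1, hac⟩ := mem_Icc.1 (hF (mem_insert_self a s))
    have hs : s ⊆ Icc 1 c := (subset_insert a s).trans hF
    have hcard : #s + 1 ≤ a := by
      have : insert a s ⊆ Icc 1 a := fun x hx =>
        mem_Icc.2 ⟨(mem_Icc.1 (hF hx)).1, (mem_insert.1 hx).elim le_of_eq fun h => (hlt x h).le⟩
      simpa [card_insert_of_notMem ha] using card_le_card this
    calc ∑ b ∈ insert a s, f b = f a + ∑ b ∈ s, f b := sum_insert ha
      _ ≤ f (#s + 1) + ∑ b ∈ Icc 1 #s, f b :=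
        add_le_add (hf ⟨by omega, hcard.trans hac⟩ ⟨ha1, hac⟩ hcard) (ih hs)
      _ = ∑ b ∈ Icc 1 #(insert a s), f b := by
        rw [card_insert_of_notMem ha, sum_Icc_succ_top (by omega), add_comm]

section Layers

variable {ι α : Type*}

noncomputable def layer (S : Finset (ι × α)) (i : ι) : Finset α :=
  S.preimage (Prod.mk i) (Prod.mk_right_injective i).injOn

@[simp]
lemma mem_layer {S : Finset (ι × α)} {i : ι} {a : α} : a ∈ layer S i ↔ (i, a) ∈ S :=
  mem_preimage

lemma sum_eq_sum_layer [Fintype ι] {M : Type*} [AddCommMonoid M] (S : Finset (ι × α))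
    (f : ι → α → M) :
    ∑ p ∈ S, f p.1 p.2 = ∑ i, ∑ a ∈ layer S i, f i a :=
  sum_finset_product' S univ (layer S) (by simp)

lemma card_eq_sum_card_layer [Fintype ι] (S : Finset (ι × α)) : #S = ∑ i, #(layer S i) := by
  simp only [card_eq_sum_ones]
  exact sum_eq_sum_layer S fun _ _ => 1

end Layers

section BudgetUnits

variable {ι : Type*} [Fintype ι] [DecidableEq ι]

def budgetUnits (k : ι → ℕ) : Finset (ι × ℕ) :=
  univ.biUnion fun i => {i} ×ˢ Icc 1 (k i)

lemma mem_budgetUnits {k : ι → ℕ} {p : ι × ℕ} : p ∈ budgetUnits k ↔ 1 ≤ p.2 ∧ p.2 ≤ k p.1 := by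
  obtain ⟨i, b⟩ := p
  simp [budgetUnits]

lemma layer_budgetUnits (k : ι → ℕ) (i : ι) : layer (budgetUnits k) i = Icc 1 (k i) := by
  ext b
  simp [mem_budgetUnits]

lemma card_budgetUnits (k : ι → ℕ) : #(budgetUnits k) = ∑ i, k i := by
  simp [card_eq_sum_card_layer (budgetUnits k), layer_budgetUnits]

lemma sum_budgetUnits {M : Type*} [AddCommMonoid M] (k : ι → ℕ) (g : ι → ℕ → M) :
    ∑ p ∈ budgetUnits k, g p.1 p.2 = ∑ i, ∑ b ∈ Icc 1 (k i), g i b := by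
  simp [sum_eq_sum_layer, layer_budgetUnits]

lemma exists_allocation_sum_ge {M : Type*} [AddCommMonoid M] [PartialOrder M]
    [IsOrderedAddMonoid M] {c : ι → ℕ} {g : ι → ℕ → M}
    (hg : ∀ i, AntitoneOn (g i) (Set.Icc 1 (c i))) {S : Finset (ι × ℕ)}
    (hS : S ⊆ budgetUnits c) :
    ∃ k : ι → ℕ, (∀ i, k i ≤ c i) ∧ ∑ i, k i = #S ∧
      ∑ p ∈ S, g p.1 p.2 ≤ ∑ i, ∑ b ∈ Icc 1 (k i), g i b := by
  have hlayer (i : ι) : layer S i ⊆ Icc 1 (c i) := fun b hb => by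
    simpa [layer_budgetUnits] using mem_layer.2 (hS (mem_layer.1 hb))
  refine ⟨fun i => #(layer S i), fun i => ?_, (card_eq_sum_card_layer S).symm, ?_⟩
  · simpa using card_le_card (hlayer i)
  · rw [sum_eq_sum_layer]
    exact sum_le_sum fun i _ => sum_le_sum_Icc_one_card (hg i) (hlayer i)

end BudgetUnits

theorem stmt_18_general (m : ℕ) (c : Fin m → ℕ) (B : ℕ)
    (g : Fin m → ℕ → ℝ)
    (hg : ∀ i : Fin m, ∀ b : ℕ, 1 ≤ b → b < c i → g i (b + 1) ≤ g i b) :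
    sSup {v : ℝ | ∃ k : Fin m → ℕ, (∀ i, k i ≤ c i) ∧ (∑ i, k i) = B ∧
        v = ∑ i : Fin m, ∑ b ∈ Finset.Icc 1 (k i), g i b}
      = sSup {v : ℝ | ∃ S : Finset (Fin m × ℕ),
          (∀ p ∈ S, 1 ≤ p.2 ∧ p.2 ≤ c p.1) ∧ S.card = B ∧
          v = ∑ p ∈ S, g p.1 p.2} := by
  apply csSup_eq_csSup_of_forall_exists_le
  · rintro _ ⟨k, hkc, rfl, rfl⟩
    refine ⟨_, ⟨budgetUnits k, fun p hp => ?_, card_budgetUnits k, (sum_budgetUnits k g).symm⟩,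
      le_rfl⟩
    exact (mem_budgetUnits.1 hp).imp_right (·.trans (hkc p.1))
  · rintro _ ⟨S, hS, rfl, rfl⟩
    obtain ⟨k, hkc, hk, hle⟩ := exists_allocation_sum_ge
      (fun i => antitoneOn_Icc_one_of_succ_le (hg i)) fun p hp => mem_budgetUnits.2 (hS p hp)
    exact ⟨_, ⟨k, hkc, hk, rfl⟩, hle⟩

/-- optimality of myopic greedy for nonincreasing layer-level
marginal gains: the optimum of `Σ_i Σ_{b=1}^{k_i} g_i(b)` over feasible budget
allocations equals the optimum of `Σ_{(i,b)∈S} g_i(b)` over size-`B` subsets of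
the admissible pairs. -/
theorem stmt_18 (m : ℕ) (hm : 0 < m) (c : Fin m → ℕ) (B : ℕ)
    (hB : B ≤ ∑ i, c i)
    (g : Fin m → ℕ → ℝ)
    (hg : ∀ i : Fin m, ∀ b : ℕ, 1 ≤ b → b < c i → g i (b + 1) ≤ g i b) :
    sSup {v : ℝ | ∃ k : Fin m → ℕ, (∀ i, k i ≤ c i) ∧ (∑ i, k i) = B ∧
        v = ∑ i : Fin m, ∑ b ∈ Finset.Icc 1 (k i), g i b}
      = sSup {v : ℝ | ∃ S : Finset (Fin m × ℕ),
          (∀ p ∈ S, 1 ≤ p.2 ∧ p.2 ≤ c p.1) ∧ S.card = B ∧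
          v = ∑ p ∈ S, g p.1 p.2} :=
  stmt_18_general m c B g hg
end
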